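/- Let γ, q, a, b ∈ k with φ ≠ 0 and q ≠ 0, and assume the relation γ²·q·(−ψa + φb) = −8φ(27φ³ − ψ³). Then, modulo the Jacobian ideal J, the polynomial −γ²·(1+ρ)·(1−ρ)⁻¹·(q/24)·(−aι(x₁³ + x₂³ + x₃³) + bι·x₁x₂x₃) is congruent to ι·(27φ³ − ψ³)·((1−ρ)⁻¹)³·x₁x₂x₃. (This is the algebraic content of the verification ks(l_χ ∪ l_{χ²}) = ks(l_χ) • ks(l_{χ²}) in the proof that the Kodaira–Spencer map QH*(T²) → Jac(W, ℤ/3) is a ring homomorphism.) -/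

import Mathlib

/-!
`W` is a homogeneous cubic, so Euler's identity `∑ xᵢ ∂ᵢW = 3W` puts `W` itself in `J` (char 0).
Both sides of the congruence lie in the Hesse pencil spanned by `x₁³ + x₂³ + x₃³` and `x₁x₂x₃`,
and the relation `hrel`, together with `(1 + ρ)(1 - ρ)² = 3`, says exactly that their difference
is a scalar multiple of `W`.
-/

open MvPolynomial

namespace MvPolynomial

variable {R σ : Type*} [CommSemiring R]

theorem IsHomogeneous.mem_of_forall_pderiv_mem [Fintype σ] {φ : MvPolynomial σ R} {n : ℕ}
    {I : Ideal (MvPolynomial σ R)} (h : φ.IsHomogeneous n) (hn : IsUnit (n : R))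
    (hI : ∀ i, pderiv i φ ∈ I) : φ ∈ I := by
  have hnφ : C (n : R) * φ ∈ I := by
    rw [map_natCast, ← nsmul_eq_mul, ← h.sum_X_mul_pderiv]
    exact I.sum_mem fun i _ ↦ I.mul_mem_left _ (hI i)
  have hφ : C (↑hn.unit⁻¹ : R) * (C (n : R) * φ) = φ := by
    rw [← mul_assoc, ← map_mul, hn.val_inv_mul, map_one, one_mul]
  exact hφ ▸ I.mul_mem_left _ hnφ

noncomputable def hesseCubic (s t : R) : MvPolynomial (Fin 3) R :=
  C s * (X 0 ^ 3 + X 1 ^ 3 + X 2 ^ 3) + C t * (X 0 * X 1 * X 2)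

theorem isHomogeneous_hesseCubic (s t : R) : (hesseCubic s t).IsHomogeneous 3 := by
  have hsum : (X 0 ^ 3 + X 1 ^ 3 + X 2 ^ 3 : MvPolynomial (Fin 3) R).IsHomogeneous 3 :=
    ((isHomogeneous_X_pow 0 3).add (isHomogeneous_X_pow 1 3)).add (isHomogeneous_X_pow 2 3)
  have hprod : (X 0 * X 1 * X 2 : MvPolynomial (Fin 3) R).IsHomogeneous 3 :=
    ((isHomogeneous_X R 0).mul (isHomogeneous_X R 1)).mul (isHomogeneous_X R 2)
  exact (hsum.C_mul s).add (hprod.C_mul t)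

theorem C_mul_hesseCubic (r s t : R) : C r * hesseCubic s t = hesseCubic (r * s) (r * t) := by
  simp only [hesseCubic, map_mul]
  ring

end MvPolynomial

theorem one_add_mul_one_sub_sq_eq_three {k : Type*} [CommRing k] {ρ : k}
    (hρ : ρ ^ 2 + ρ + 1 = 0) : (1 + ρ) * (1 - ρ) ^ 2 = 3 := by
  linear_combination (ρ - 2) * hρ

theorem stmt4_general (k : Type*) [Field k] [CharZero k] (ι ρ φ ψ : k)
    (hρ : ρ ^ 2 + ρ + 1 = 0)
    (W : MvPolynomial (Fin 3) k)
    (hW : W = -(C φ * C ι) * (X 0 ^ 3 + X 1 ^ 3 + X 2 ^ 3)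
        + C ψ * C ι * (X 0 * X 1 * X 2))
    (J : Ideal (MvPolynomial (Fin 3) k))
    (hJ : J = Ideal.span {pderiv 0 W, pderiv 1 W, pderiv 2 W})
    (γ q a b : k) (hφ : φ ≠ 0)
    (hrel : γ ^ 2 * q * (-(ψ * a) + φ * b) = -(8 * φ * (27 * φ ^ 3 - ψ ^ 3))) :
    C (-(γ ^ 2) * (1 + ρ) * (1 - ρ)⁻¹ * (q / 24)) *
        (-(C a * C ι) * (X 0 ^ 3 + X 1 ^ 3 + X 2 ^ 3) + C b * C ι * (X 0 * X 1 * X 2))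
      - C (ι * (27 * φ ^ 3 - ψ ^ 3) * ((1 - ρ)⁻¹) ^ 3) * (X 0 * X 1 * X 2) ∈ J := by
  set c := -(γ ^ 2) * (1 + ρ) * (1 - ρ)⁻¹ * (q / 24) with hc
  set d := ι * (27 * φ ^ 3 - ψ ^ 3) * ((1 - ρ)⁻¹) ^ 3 with hd
  have hW' : W = hesseCubic (-(φ * ι)) (ψ * ι) := by
    simp only [hW, hesseCubic, map_mul, map_neg]
  have hWJ : W ∈ J := by
    refine (hW' ▸ isHomogeneous_hesseCubic _ _).mem_of_forall_pderiv_mem (by simp) fun i ↦ ?_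
    rw [hJ]
    fin_cases i <;> exact Ideal.subset_span (by simp)
  have h3 := one_add_mul_one_sub_sq_eq_three hρ
  have hρ1 : 1 - ρ ≠ 0 := fun h ↦ by simp [h] at h3
  have hcubic : c * a / φ * -(φ * ι) = -(c * a * ι) := by field_simp
  have hprod : c * b * ι - d = c * a / φ * (ψ * ι) := by
    rw [hc, hd]
    field_simp
    linear_combination (-ι * (1 + ρ) * (1 - ρ) ^ 2) * hrel + 8 * ι * φ * (27 * φ ^ 3 - ψ ^ 3) * h3
  convert J.mul_mem_left (C (c * a / φ)) hWJ using 1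
  rw [hW', C_mul_hesseCubic, hcubic, ← hprod]
  simp only [hesseCubic, map_sub, map_mul, map_neg]
  ring

/-- Algebraic content of the verification `ks(l_χ ∪ l_{χ²}) = ks(l_χ) • ks(l_{χ²})` for
`T²`: if `γ²·q·(−ψa + φb) = −8φ(27φ³ − ψ³)` with `φ ≠ 0`, `q ≠ 0`, then modulo the
Jacobian ideal `J` of `W = −φι(x₁³+x₂³+x₃³) + ψι·x₁x₂x₃` the polynomial
`−γ²·(1+ρ)·(1−ρ)⁻¹·(q/24)·(−aι(x₁³+x₂³+x₃³) + bι·x₁x₂x₃)` is congruent to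
`ι·(27φ³ − ψ³)·((1−ρ)⁻¹)³·x₁x₂x₃`. -/
theorem stmt4 (k : Type*) [Field k] [CharZero k] (ι ρ φ ψ : k)
    (hι : ι ^ 2 = -1) (hρ : ρ ^ 2 + ρ + 1 = 0)
    (W : MvPolynomial (Fin 3) k)
    (hW : W = -(C φ * C ι) * (X 0 ^ 3 + X 1 ^ 3 + X 2 ^ 3)
        + C ψ * C ι * (X 0 * X 1 * X 2))
    (J : Ideal (MvPolynomial (Fin 3) k))
    (hJ : J = Ideal.span {pderiv 0 W, pderiv 1 W, pderiv 2 W})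
    (γ q a b : k) (hφ : φ ≠ 0) (hq : q ≠ 0)
    (hrel : γ ^ 2 * q * (-(ψ * a) + φ * b) = -(8 * φ * (27 * φ ^ 3 - ψ ^ 3))) :
    C (-(γ ^ 2) * (1 + ρ) * (1 - ρ)⁻¹ * (q / 24)) *
        (-(C a * C ι) * (X 0 ^ 3 + X 1 ^ 3 + X 2 ^ 3) + C b * C ι * (X 0 * X 1 * X 2))
      - C (ι * (27 * φ ^ 3 - ψ ^ 3) * ((1 - ρ)⁻¹) ^ 3) * (X 0 * X 1 * X 2) ∈ J :=
  stmt4_general k ι ρ φ ψ hρ W hW J hJ γ q a b hφ hrel
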